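/- Let Σ = V(θ₀) ∈ PDS(k) with V linear and L full column rank, and let H(C) = vec(C)/|C|^{1/k}. Then H'(Σ) [2σ₁ L (Lᵀ(Σ⁻¹⊗Σ⁻¹)L)⁻¹ Lᵀ + σ₂ vec(Σ)vec(Σ)ᵀ] H'(Σ)ᵀ = (2σ₁/|Σ|^{2/k}) { L (Lᵀ (Σ⁻¹ ⊗ Σ⁻¹) L)⁻¹ Lᵀ − (1/k) vec(Σ) vec(Σ)ᵀ }. -/

import Mathlib

/-! With `v = vec Σ`, `w = vec Σ⁻¹`, `c = |Σ|^{-1/k}` and `P = L (Lᵀ(Σ⁻¹⊗Σ⁻¹)L)⁻¹ Lᵀ`,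
the Jacobian is `H'(Σ) = c (I - k⁻¹ v wᵀ)`. As `(Σ⁻¹⊗Σ⁻¹) v = w` and `v = L θ₀` lies in the
column space of `L`, the identity `P (Σ⁻¹⊗Σ⁻¹) L = L` gives `P w = v`; with `wᵀ v = tr(Σ⁻¹Σ) = k`
this yields `H'(Σ) v = 0`, which kills the `σ₂` term, and `H'(Σ) P H'(Σ)ᵀ = c² (P - k⁻¹ v vᵀ)`. -/

open Matrix
open scoped Kronecker

/-- `vecm M` stacks the columns of `M` into a vector: `vecm M (j, i) = M i j`. -/
def vecm {k : ℕ} (M : Matrix (Fin k) (Fin k) ℝ) : Fin k × Fin k → ℝ :=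
  fun p => M p.2 p.1

namespace Matrix

variable {m n K : Type*}

theorem PosDef.transpose_eq {S : Matrix n n ℝ} (hS : S.PosDef) : Sᵀ = S :=
  (isHermitian_iff_isSymm.mp hS.isHermitian).eq

section Projection

variable [Fintype n]

theorem mulVec_injective_of_rank_eq_card [Field K] {A : Matrix m n K}
    (h : A.rank = Fintype.card n) : Function.Injective A.mulVec := by
  have hker : Module.finrank K (LinearMap.ker A.mulVecLin) = 0 := by
    have := LinearMap.finrank_range_add_finrank_ker A.mulVecLin
    rw [← rank, h, Module.finrank_fintype_fun_eq_card] at this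
    omega
  rw [← coe_mulVecLin, ← LinearMap.ker_eq_bot]
  exact Submodule.finrank_eq_zero.mp hker

variable [Fintype m]

theorem PosDef.transpose_mul_mul_same {M : Matrix m m ℝ} (hM : M.PosDef) {L : Matrix m n ℝ}
    (hL : Function.Injective L.mulVec) : (Lᵀ * M * L).PosDef := by
  simpa only [conjTranspose_eq_transpose_of_trivial] using hM.conjTranspose_mul_mul_same hL

variable [DecidableEq n]

theorem mul_inv_mul_transpose_mul_mul_self {M : Matrix m m ℝ} {L : Matrix m n ℝ}
    (hN : IsUnit (Lᵀ * M * L)) : L * (Lᵀ * M * L)⁻¹ * Lᵀ * M * L = L :=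
  calc L * (Lᵀ * M * L)⁻¹ * Lᵀ * M * L = L * ((Lᵀ * M * L)⁻¹ * (Lᵀ * M * L)) := by
        simp only [Matrix.mul_assoc]
    _ = L := by rw [nonsing_inv_mul _ ((isUnit_iff_isUnit_det _).mp hN), Matrix.mul_one]

theorem transpose_mul_inv_mul_transpose {M : Matrix m m ℝ} (hM : Mᵀ = M) (L : Matrix m n ℝ) :
    (L * (Lᵀ * M * L)⁻¹ * Lᵀ)ᵀ = L * (Lᵀ * M * L)⁻¹ * Lᵀ := by
  rw [transpose_mul, transpose_mul, transpose_nonsing_inv, transpose_mul, transpose_mul, hM,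
    transpose_transpose]
  simp only [Matrix.mul_assoc]

end Projection

section Sandwich

variable [Fintype n] [DecidableEq n] [Field K] {P : Matrix n n K} {v w : n → K}
  {r : K}

theorem mulVec_eq_zero_of_dotProduct_eq (hwv : w ⬝ᵥ v = r) (hr : r ≠ 0) (c : K) :
    ((-(1 / r) * c) • vecMulVec v w + c • 1) *ᵥ v = 0 := by
  rw [add_mulVec, smul_mulVec, smul_mulVec, vecMulVec_mulVec, one_mulVec, hwv]
  ext i
  simp only [Pi.add_apply, Pi.smul_apply, smul_eq_mul, MulOpposite.smul_eq_mul_unop,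
    MulOpposite.unop_op, Pi.zero_apply]
  field_simp
  ring

theorem mul_mul_transpose_of_mulVec_eq (hP : Pᵀ = P) (hPw : P *ᵥ w = v) (hwv : w ⬝ᵥ v = r)
    (hr : r ≠ 0) (c : K) :
    ((-(1 / r) * c) • vecMulVec v w + c • 1) * P * ((-(1 / r) * c) • vecMulVec v w + c • 1)ᵀ =
      c ^ 2 • (P - (1 / r) • vecMulVec v v) := by
  have hwP : w ᵥ* P = v := by rw [← hP, vecMul_transpose, hPw]
  have hvvw : vecMulVec v v *ᵥ w = r • v := by
    rw [vecMulVec_mulVec, dotProduct_comm, hwv, op_smul_eq_smul]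
  simp only [transpose_add, transpose_smul, transpose_one, transpose_vecMulVec, add_mul,
    mul_add, smul_mul_assoc, mul_smul_comm, vecMulVec_mul, mul_vecMulVec, hwP, hPw, hvvw,
    smul_vecMulVec, one_mul, mul_one, smul_sub, smul_smul]
  match_scalars <;> field_simp; ring

theorem mul_add_vecMulVec_mul_transpose_of_mulVec_eq (hP : Pᵀ = P) (hPw : P *ᵥ w = v)
    (hwv : w ⬝ᵥ v = r) (hr : r ≠ 0) (a b c : K) :
    ((-(1 / r) * c) • vecMulVec v w + c • 1) * (a • P + b • vecMulVec v v) *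
        ((-(1 / r) * c) • vecMulVec v w + c • 1)ᵀ =
      (a * c ^ 2) • (P - (1 / r) • vecMulVec v v) := by
  rw [mul_add, add_mul, mul_smul_comm, smul_mul_assoc, mul_smul_comm, smul_mul_assoc,
    mul_mul_transpose_of_mulVec_eq hP hPw hwv hr, mul_vecMulVec,
    mulVec_eq_zero_of_dotProduct_eq hwv hr, zero_vecMulVec, Matrix.zero_mul, smul_zero, add_zero,
    smul_smul]

end Sandwich

end Matrix

theorem vecm_eq_vec {k : ℕ} (M : Matrix (Fin k) (Fin k) ℝ) : vecm M = M.vec := rfl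

theorem vecm_sum_smul {k l : ℕ} (θ : Fin l → ℝ) (Ls : Fin l → Matrix (Fin k) (Fin k) ℝ) :
    vecm (∑ j, θ j • Ls j) = (Matrix.of fun p j => vecm (Ls j) p) *ᵥ θ := by
  ext p
  simp only [vecm, Matrix.sum_apply, Matrix.smul_apply, smul_eq_mul, mulVec, dotProduct, of_apply,
    mul_comm]

theorem inv_kronecker_inv_mulVec_vecm {k : ℕ} {S : Matrix (Fin k) (Fin k) ℝ} (hS : S.PosDef) :
    (S⁻¹ ⊗ₖ S⁻¹) *ᵥ vecm S = vecm S⁻¹ := by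
  rw [vecm_eq_vec, kronecker_mulVec_vec, hS.inv.transpose_eq,
    nonsing_inv_mul _ ((isUnit_iff_isUnit_det _).mp hS.isUnit), Matrix.one_mul, vecm_eq_vec]

theorem vecm_inv_dotProduct_vecm {k : ℕ} {S : Matrix (Fin k) (Fin k) ℝ} (hS : S.PosDef) :
    vecm S⁻¹ ⬝ᵥ vecm S = k := by
  rw [vecm_eq_vec, vecm_eq_vec, vec_dotProduct_vec, hS.inv.transpose_eq,
    nonsing_inv_mul _ ((isUnit_iff_isUnit_det _).mp hS.isUnit), trace_one, Fintype.card_fin]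

theorem shape_asymptotic_variance_general {k l : ℕ}
    (θ₀ : Fin l → ℝ) (Ls : Fin l → Matrix (Fin k) (Fin k) ℝ)
    (S : Matrix (Fin k) (Fin k) ℝ) (hSdef : S = ∑ j, θ₀ j • Ls j) (hS : S.PosDef)
    (L : Matrix (Fin k × Fin k) (Fin l) ℝ)
    (hLdef : L = Matrix.of fun p j => vecm (Ls j) p)
    (hrank : L.rank = l)
    (σ₁ σ₂ : ℝ) :
    ((-(1 / (k : ℝ)) * (S.det ^ ((1 : ℝ) / k))⁻¹) • vecMulVec (vecm S) (vecm S⁻¹)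
        + (S.det ^ ((1 : ℝ) / k))⁻¹ • (1 : Matrix (Fin k × Fin k) (Fin k × Fin k) ℝ)) *
      ((2 * σ₁) • (L * (Lᵀ * (S⁻¹ ⊗ₖ S⁻¹) * L)⁻¹ * Lᵀ)
        + σ₂ • vecMulVec (vecm S) (vecm S)) *
      ((-(1 / (k : ℝ)) * (S.det ^ ((1 : ℝ) / k))⁻¹) • vecMulVec (vecm S) (vecm S⁻¹)
        + (S.det ^ ((1 : ℝ) / k))⁻¹ • (1 : Matrix (Fin k × Fin k) (Fin k × Fin k) ℝ))ᵀ
    = (2 * σ₁ / S.det ^ ((2 : ℝ) / k)) •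
        (L * (Lᵀ * (S⁻¹ ⊗ₖ S⁻¹) * L)⁻¹ * Lᵀ
          - (1 / (k : ℝ)) • vecMulVec (vecm S) (vecm S)) := by
  rcases Nat.eq_zero_or_pos k with rfl | hk
  · ext p
    exact p.1.elim0
  have hN : (Lᵀ * (S⁻¹ ⊗ₖ S⁻¹) * L).PosDef :=
    (hS.inv.kronecker hS.inv).transpose_mul_mul_same
      (mulVec_injective_of_rank_eq_card (by rw [hrank, Fintype.card_fin]))
  have hvecm : vecm S = L *ᵥ θ₀ := by rw [hSdef, hLdef, vecm_sum_smul]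
  have hPw : (L * (Lᵀ * (S⁻¹ ⊗ₖ S⁻¹) * L)⁻¹ * Lᵀ) *ᵥ vecm S⁻¹ = vecm S := by
    rw [← inv_kronecker_inv_mulVec_vecm hS, mulVec_mulVec, hvecm, mulVec_mulVec,
      mul_inv_mul_transpose_mul_mul_self hN.isUnit]
  have hdet : S.det ^ ((2 : ℝ) / k) = (S.det ^ ((1 : ℝ) / k)) ^ 2 := by
    rw [← Real.rpow_mul_natCast hS.det_pos.le]
    ring_nf
  rw [mul_add_vecMulVec_mul_transpose_of_mulVec_eq
    (transpose_mul_inv_mul_transpose (hS.inv.kronecker hS.inv).transpose_eq L) hPw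
    (vecm_inv_dotProduct_vecm hS) (Nat.cast_ne_zero.mpr hk.ne'), hdet, inv_pow, ← div_eq_mul_inv]

/-- The asymptotic variance of the shape estimator: with
`H'(Σ) = -(1/k)|Σ|^{-1/k} vec Σ vec Σ⁻¹ᵀ + |Σ|^{-1/k} I`,
`H'(Σ) [2σ₁ L(Lᵀ(Σ⁻¹⊗Σ⁻¹)L)⁻¹Lᵀ + σ₂ vecΣ vecΣᵀ] H'(Σ)ᵀ
  = (2σ₁/|Σ|^{2/k}) { L(Lᵀ(Σ⁻¹⊗Σ⁻¹)L)⁻¹Lᵀ - (1/k) vecΣ vecΣᵀ }`. -/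
theorem shape_asymptotic_variance {k l : ℕ}
    (θ₀ : Fin l → ℝ) (Ls : Fin l → Matrix (Fin k) (Fin k) ℝ)
    (hsym : ∀ j, (Ls j)ᵀ = Ls j)
    (S : Matrix (Fin k) (Fin k) ℝ) (hSdef : S = ∑ j, θ₀ j • Ls j) (hS : S.PosDef)
    (L : Matrix (Fin k × Fin k) (Fin l) ℝ)
    (hLdef : L = Matrix.of fun p j => vecm (Ls j) p)
    (hrank : L.rank = l)
    (σ₁ σ₂ : ℝ) :
    ((-(1 / (k : ℝ)) * (S.det ^ ((1 : ℝ) / k))⁻¹) • vecMulVec (vecm S) (vecm S⁻¹)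
        + (S.det ^ ((1 : ℝ) / k))⁻¹ • (1 : Matrix (Fin k × Fin k) (Fin k × Fin k) ℝ)) *
      ((2 * σ₁) • (L * (Lᵀ * (S⁻¹ ⊗ₖ S⁻¹) * L)⁻¹ * Lᵀ)
        + σ₂ • vecMulVec (vecm S) (vecm S)) *
      ((-(1 / (k : ℝ)) * (S.det ^ ((1 : ℝ) / k))⁻¹) • vecMulVec (vecm S) (vecm S⁻¹)
        + (S.det ^ ((1 : ℝ) / k))⁻¹ • (1 : Matrix (Fin k × Fin k) (Fin k × Fin k) ℝ))ᵀ
    = (2 * σ₁ / S.det ^ ((2 : ℝ) / k)) •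
        (L * (Lᵀ * (S⁻¹ ⊗ₖ S⁻¹) * L)⁻¹ * Lᵀ
          - (1 / (k : ℝ)) • vecMulVec (vecm S) (vecm S)) :=
  shape_asymptotic_variance_general θ₀ Ls S hSdef hS L hLdef hrank σ₁ σ₂
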